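/- Let M ∈ ℝ^{n×n} be symmetric positive definite, A ∈ ℝ^{n×n}, let B ∈ ℝ^{m×n} have full row rank m, and let τ > 0. Consider the coefficient pair (ℰ, 𝒜) of the projection scheme, given in 4×4 block form (with block sizes n, m, n, m) by ℰ = [[(1/τ)M, 0, 0, 0], [0, 0, 0, 0], [−M, −(τ/2)Bᵀ, M, 0], [0, −I, 0, I]] and 𝒜 = [[0, (1/τ)M + A, 0, Bᵀ], [−(2/τ)B, −B M⁻¹ Bᵀ, 0, 0], [0, 0, 0, 0], [0, 0, 0, I]], both of size (2n+2m)×(2n+2m). Then there exist invertible matrices P, Q ∈ ℝ^{(2n+2m)×(2n+2m)} and a matrix J ∈ ℝ^{(2n+m)×(2n+m)} such that P ℰ Q = [[I_{2n+m}, 0], [0, 0]] and P 𝒜 Q = [[J, 0], [0, I_m]]. In other words, the difference-algebraic equation of the projection scheme has Kronecker index 1. -/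

import Mathlib

/-!
The substitution `v = w + (τ/2) M⁻¹Bᵀ φ`, `p = q + φ` (the matrix `projectionSchemeQ`) removes
`φ` from the last two rows of `ℰ`, and row operations (`projectionSchemeP`) then turn `ℰ` into
the projection killing the `φ`-component, so `φ` is the only algebraic variable. The
`φφ`-block of the transformed `𝒜` is still `-B M⁻¹ Bᵀ`, which is invertible because `M⁻¹` is
positive definite and `Bᵀ` is injective. Eliminating `φ` against this block (a Schur complement)
gives the normal form `([[I, 0], [0, 0]], [[J, 0], [0, I]])`.
-/

open Matrix

namespace Matrix

section StrictEquivalence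

variable {ι κ R : Type*} [Fintype ι] [DecidableEq ι] [Fintype κ] [DecidableEq κ] [CommRing R]

def StrictlyEquivalent (E A E' A' : Matrix ι ι R) : Prop :=
  ∃ P Q : Matrix ι ι R, IsUnit P ∧ IsUnit Q ∧ P * E * Q = E' ∧ P * A * Q = A'

theorem StrictlyEquivalent.trans {E A E' A' E'' A'' : Matrix ι ι R}
    (h : StrictlyEquivalent E A E' A') (h' : StrictlyEquivalent E' A' E'' A'') :
    StrictlyEquivalent E A E'' A'' := by
  obtain ⟨P, Q, hP, hQ, rfl, rfl⟩ := h
  obtain ⟨P', Q', hP', hQ', rfl, rfl⟩ := h'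
  exact ⟨P' * P, Q * Q', hP'.mul hP, hQ.mul hQ', by noncomm_ring, by noncomm_ring⟩

theorem StrictlyEquivalent.reindex {E A E' A' : Matrix ι ι R}
    (h : StrictlyEquivalent E A E' A') (e : ι ≃ κ) :
    StrictlyEquivalent (reindex e e E) (reindex e e A) (reindex e e E') (reindex e e A') := by
  obtain ⟨P, Q, hP, hQ, rfl, rfl⟩ := h
  let f := reindexAlgEquiv R R e
  refine ⟨f P, f Q, hP.map f, hQ.map f, ?_, ?_⟩ <;>
    simp only [f, ← coe_reindexAlgEquiv R R, map_mul]

theorem strictlyEquivalent_schurComplement (A : Matrix ι ι R) (B : Matrix ι κ R)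
    (C : Matrix κ ι R) (D : Matrix κ κ R) (hD : IsUnit D.det) :
    StrictlyEquivalent (fromBlocks 1 0 0 0) (fromBlocks A B C D)
      (fromBlocks 1 0 0 0) (fromBlocks (A - B * D⁻¹ * C) 0 0 1) := by
  refine ⟨fromBlocks 1 (-(B * D⁻¹)) 0 D⁻¹, fromBlocks 1 0 (-(D⁻¹ * C)) 1, ?_, ?_, ?_, ?_⟩
  · rw [isUnit_iff_isUnit_det, det_fromBlocks_zero₂₁, det_one, one_mul]
    exact isUnit_nonsing_inv_det D hD
  · simp [isUnit_iff_isUnit_det]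
  · simp [fromBlocks_multiply]
  · simp [fromBlocks_multiply, Matrix.mul_assoc, nonsing_inv_mul _ hD, sub_eq_add_neg]

end StrictEquivalence

theorem reindex_sumCongr_fromBlocks_zero {ι ι' κ κ' α : Type*} [Zero α] (e : ι ≃ ι')
    (e' : κ ≃ κ') (A : Matrix ι ι α) (D : Matrix κ κ α) :
    reindex (e.sumCongr e') (e.sumCongr e') (fromBlocks A 0 0 D) =
      fromBlocks (reindex e e A) 0 0 (reindex e' e' D) := by
  ext (i | i) (j | j) <;> rfl

theorem vecMul_injective_of_rank_eq_card {K m n : Type*} [Field K] [Fintype m] [Fintype n]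
    {B : Matrix m n K} (hB : B.rank = Fintype.card m) : Function.Injective B.vecMul :=
  vecMul_injective_iff.mpr <| linearIndependent_iff_card_eq_finrank_span.mpr <| by
    rw [Set.finrank, ← rank_eq_finrank_span_row, hB]

open scoped ComplexOrder in
theorem PosDef.mul_inv_mul_conjTranspose_of_rank_eq_card {𝕜 m n : Type*} [RCLike 𝕜] [Fintype m]
    [Fintype n] [DecidableEq n] {M : Matrix n n 𝕜} (hM : M.PosDef) {B : Matrix m n 𝕜}
    (hB : B.rank = Fintype.card m) : (B * M⁻¹ * Bᴴ).PosDef :=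
  hM.inv.mul_mul_conjTranspose_same (vecMul_injective_of_rank_eq_card hB)

end Matrix

def Equiv.sumMoveSecondLast (ι κ : Type*) : ((ι ⊕ κ) ⊕ (ι ⊕ κ)) ≃ ((ι ⊕ (ι ⊕ κ)) ⊕ κ) :=
  (Equiv.sumAssoc ι κ (ι ⊕ κ)).trans <|
    ((Equiv.refl ι).sumCongr (Equiv.sumComm κ (ι ⊕ κ))).trans (Equiv.sumAssoc ι (ι ⊕ κ) κ).symm

theorem toBlocks₂₂_reindex_sumMoveSecondLast {ι κ α : Type*}
    (X : Matrix ((ι ⊕ κ) ⊕ (ι ⊕ κ)) ((ι ⊕ κ) ⊕ (ι ⊕ κ)) α) :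
    (reindex (Equiv.sumMoveSecondLast ι κ) (Equiv.sumMoveSecondLast ι κ) X).toBlocks₂₂ =
      X.toBlocks₁₁.toBlocks₂₂ :=
  rfl

theorem reindex_sumMoveSecondLast_fromBlocks_one_zero {ι κ α : Type*} [DecidableEq ι]
    [DecidableEq κ] [Zero α] [One α] :
    reindex (Equiv.sumMoveSecondLast ι κ) (Equiv.sumMoveSecondLast ι κ)
      (fromBlocks (fromBlocks 1 0 0 0) 0 0 1 : Matrix ((ι ⊕ κ) ⊕ (ι ⊕ κ)) _ α) =
      fromBlocks 1 0 0 0 := by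
  ext ((i | i | i) | i) ((j | j | j) | j) <;> simp [Equiv.sumMoveSecondLast, one_apply]

section ProjectionScheme

variable {K ι κ : Type*} [Field K] [Fintype ι] [DecidableEq ι] [Fintype κ] [DecidableEq κ]

def projectionSchemeE (τ : K) (M : Matrix ι ι K) (B : Matrix κ ι K) :
    Matrix ((ι ⊕ κ) ⊕ (ι ⊕ κ)) ((ι ⊕ κ) ⊕ (ι ⊕ κ)) K :=
  fromBlocks (fromBlocks ((1 / τ) • M) 0 0 0) 0 (fromBlocks (-M) (-(τ / 2) • Bᵀ) 0 (-1))
    (fromBlocks M 0 0 1)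

noncomputable def projectionSchemeA (τ : K) (M A : Matrix ι ι K) (B : Matrix κ ι K) :
    Matrix ((ι ⊕ κ) ⊕ (ι ⊕ κ)) ((ι ⊕ κ) ⊕ (ι ⊕ κ)) K :=
  fromBlocks (fromBlocks 0 0 (-(2 / τ) • B) (-(B * M⁻¹ * Bᵀ)))
    (fromBlocks ((1 / τ) • M + A) Bᵀ 0 0) 0 (fromBlocks 0 0 0 1)

noncomputable def projectionSchemeP (τ : K) (M : Matrix ι ι K) :
    Matrix ((ι ⊕ κ) ⊕ (ι ⊕ κ)) ((ι ⊕ κ) ⊕ (ι ⊕ κ)) K :=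
  fromBlocks (fromBlocks (τ • M⁻¹) 0 0 1) 0 (fromBlocks (τ • M⁻¹) 0 0 0) (fromBlocks M⁻¹ 0 0 1)

noncomputable def projectionSchemeQ (τ : K) (M : Matrix ι ι K) (B : Matrix κ ι K) :
    Matrix ((ι ⊕ κ) ⊕ (ι ⊕ κ)) ((ι ⊕ κ) ⊕ (ι ⊕ κ)) K :=
  fromBlocks 1 0 (fromBlocks 0 ((τ / 2) • (M⁻¹ * Bᵀ)) 0 1) 1

variable {τ : K} {M A : Matrix ι ι K} {B : Matrix κ ι K}

theorem isUnit_projectionSchemeP (hτ : τ ≠ 0) (hM : IsUnit M.det) :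
    IsUnit (projectionSchemeP (κ := κ) τ M) := by
  simp [projectionSchemeP, isUnit_iff_isUnit_det, det_fromBlocks_zero₁₂, hτ, hM.ne_zero]

theorem isUnit_projectionSchemeQ : IsUnit (projectionSchemeQ τ M B) := by
  simp [projectionSchemeQ, isUnit_iff_isUnit_det]

theorem projectionScheme_P_mul_E_mul_Q (hτ : τ ≠ 0) (hM : IsUnit M.det) :
    projectionSchemeP τ M * projectionSchemeE τ M B * projectionSchemeQ τ M B =
      fromBlocks (fromBlocks 1 0 0 0) 0 0 1 := by
  simp [projectionSchemeP, projectionSchemeE, projectionSchemeQ, fromBlocks_multiply,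
    fromBlocks_add, smul_smul, hτ, nonsing_inv_mul _ hM]

theorem toBlocks₂₂_toBlocks₁₁_projectionScheme_P_mul_A_mul_Q :
    (projectionSchemeP τ M * projectionSchemeA τ M A B *
      projectionSchemeQ τ M B).toBlocks₁₁.toBlocks₂₂ = -(B * M⁻¹ * Bᵀ) := by
  simp [projectionSchemeP, projectionSchemeA, projectionSchemeQ, fromBlocks_multiply,
    fromBlocks_add]

theorem projectionScheme_strictlyEquivalent_index_one (hτ : τ ≠ 0) (hM : IsUnit M.det)
    (hS : IsUnit (B * M⁻¹ * Bᵀ).det) :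
    ∃ J, StrictlyEquivalent
      (reindex (Equiv.sumMoveSecondLast ι κ) (Equiv.sumMoveSecondLast ι κ)
        (projectionSchemeE τ M B))
      (reindex (Equiv.sumMoveSecondLast ι κ) (Equiv.sumMoveSecondLast ι κ)
        (projectionSchemeA τ M A B))
      (fromBlocks 1 0 0 0) (fromBlocks J 0 0 1) := by
  set e := Equiv.sumMoveSecondLast ι κ
  set A₀ := projectionSchemeP τ M * projectionSchemeA τ M A B * projectionSchemeQ τ M B
  have h₀ : StrictlyEquivalent (projectionSchemeE τ M B) (projectionSchemeA τ M A B)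
      (fromBlocks (fromBlocks 1 0 0 0) 0 0 1) A₀ :=
    ⟨_, _, isUnit_projectionSchemeP hτ hM, isUnit_projectionSchemeQ,
      projectionScheme_P_mul_E_mul_Q hτ hM, rfl⟩
  have h₁ := h₀.reindex e
  rw [reindex_sumMoveSecondLast_fromBlocks_one_zero, ← fromBlocks_toBlocks (reindex e e A₀),
    toBlocks₂₂_reindex_sumMoveSecondLast,
    toBlocks₂₂_toBlocks₁₁_projectionScheme_P_mul_A_mul_Q] at h₁
  have hS' : IsUnit (-(B * M⁻¹ * Bᵀ)).det := by simpa [det_neg] using hS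
  exact ⟨_, h₁.trans (strictlyEquivalent_schurComplement _ _ _ _ hS')⟩

end ProjectionScheme

/-- The difference-algebraic equation of the projection scheme has Kronecker index 1: its
coefficient pair `(ℰ, 𝒜)`, given in 4×4 block form with block sizes `n, m, n, m` by
`ℰ = [[(1/τ)M, 0, 0, 0], [0, 0, 0, 0], [-M, -(τ/2)Bᵀ, M, 0], [0, -I, 0, I]]` and
`𝒜 = [[0, 0, (1/τ)M + A, Bᵀ], [-(2/τ)B, -B M⁻¹ Bᵀ, 0, 0], [0, 0, 0, 0], [0, 0, 0, I]]`
(the block `(1/τ)M + A` of size n×n is placed in the n-sized column block, which is the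
only dimensionally consistent placement), is equivalent via invertible `P`, `Q` (after
reindexing into blocks of sizes `2n + m` and `m`) to `([[I, 0], [0, 0]], [[J, 0], [0, I]])`. -/
theorem projection_scheme_kronecker_index_one (n m : ℕ)
    (M A : Matrix (Fin n) (Fin n) ℝ) (B : Matrix (Fin m) (Fin n) ℝ)
    (hM : M.PosDef) (hB : B.rank = m) (τ : ℝ) (hτ : 0 < τ) :
    ∃ (e : ((Fin n ⊕ Fin m) ⊕ (Fin n ⊕ Fin m)) ≃ (Fin (2 * n + m) ⊕ Fin m))
      (P Q : Matrix (Fin (2 * n + m) ⊕ Fin m) (Fin (2 * n + m) ⊕ Fin m) ℝ)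
      (J : Matrix (Fin (2 * n + m)) (Fin (2 * n + m)) ℝ),
      IsUnit P ∧ IsUnit Q ∧
      P * (reindex e e (fromBlocks
          (fromBlocks ((1 / τ) • M) 0 0 0) (0 : Matrix (Fin n ⊕ Fin m) (Fin n ⊕ Fin m) ℝ)
          (fromBlocks (-M) (-(τ / 2) • Bᵀ) 0 (-1)) (fromBlocks M 0 0 1))) * Q =
        fromBlocks 1 0 0 0 ∧
      P * (reindex e e (fromBlocks
          (fromBlocks 0 0 (-(2 / τ) • B) (-(B * M⁻¹ * Bᵀ)))
          (fromBlocks ((1 / τ) • M + A) Bᵀ 0 0)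
          (0 : Matrix (Fin n ⊕ Fin m) (Fin n ⊕ Fin m) ℝ) (fromBlocks 0 0 0 1))) * Q =
        fromBlocks J 0 0 1 := by
  have hS : IsUnit (B * M⁻¹ * Bᵀ).det := by
    have hS := hM.mul_inv_mul_conjTranspose_of_rank_eq_card (B := B) (by simpa using hB)
    rw [conjTranspose_eq_transpose_of_trivial] at hS
    exact (isUnit_iff_isUnit_det _).mp hS.isUnit
  obtain ⟨J, h⟩ := projectionScheme_strictlyEquivalent_index_one (A := A) hτ.ne'
    ((isUnit_iff_isUnit_det M).mp hM.isUnit) hS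
  let f : Fin n ⊕ (Fin n ⊕ Fin m) ≃ Fin (2 * n + m) :=
    Fintype.equivFinOfCardEq (by simp only [Fintype.card_sum, Fintype.card_fin]; omega)
  let g := f.sumCongr (Equiv.refl (Fin m))
  obtain ⟨P, Q, hP, hQ, hE, hA⟩ := h.reindex g
  refine ⟨(Equiv.sumMoveSecondLast _ _).trans g, P, Q, reindex f f J, hP, hQ, ?_, ?_⟩
  · have hf : reindex f f (1 : Matrix _ _ ℝ) = 1 := submatrix_one_equiv f.symm
    rwa [reindex_sumCongr_fromBlocks_zero, reindex_refl_refl, hf] at hE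
  · rwa [reindex_sumCongr_fromBlocks_zero, reindex_refl_refl] at hA
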